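/- arXiv:2201.00482 — 2 statements merged into one kernel-verified Lean document; each statement's English description precedes it below -/
import Mathlib

section
/- Let M be a ℤ-lattice in V with dual lattice M^∨, and let N ⊆ M be a primitive ℤ-submodule. Then the restriction map M^∨ → N^∨ = Hom_ℤ(N, ℤ), sending x to the homomorphism n ↦ b(x,n), induces an isomorphism of abelian groups M^∨/(N + N^⊥_{M^∨}) ≅ N^∨/N, where N^∨/N denotes the cokernel of the natural map N → N^∨. -/
/-!
Since `N` is primitive, `M ⧸ N` is a finitely generated torsion-free, hence free, `ℤ`-module, so
every `f : N → ℤ` extends to `M → ℤ`. As `ℚ` is an injective `ℤ`-module this extends further to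
a `ℚ`-linear functional on `V`, which nondegeneracy writes as `b x`; integrality on `M` puts `x`
in `M^∨`, so the restriction `M^∨ → N^∨` is onto. Its composite with `N^∨ → N^∨/N` kills `x`
exactly when `b x` agrees on `N` with `b n` for some `n ∈ N`, i.e. when `x - n ∈ N^⊥_{M^∨}`.
-/

open Submodule LinearMap

theorem LinearMap.exists_extend_of_projective_quotient_range
    {R N M P : Type*} [Ring R] [AddCommGroup N] [Module R N] [AddCommGroup M] [Module R M]
    [AddCommGroup P] [Module R P] {i : N →ₗ[R] M} (hi : Function.Injective i)
    [Module.Projective R (M ⧸ range i)] (f : N →ₗ[R] P) :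
    ∃ g : M →ₗ[R] P, g ∘ₗ i = f := by
  obtain ⟨r, hr⟩ := (((exact_map_mkQ_range i).split_tfae hi (range i).mkQ_surjective).out 0 1).mp
    ((range i).mkQ.exists_rightInverse_of_surjective (range i).range_mkQ)
  exact ⟨f ∘ₗ r, by rw [comp_assoc, hr, comp_id]⟩

theorem Submodule.isTorsionFree_quotient_range_inclusion
    {R V : Type*} [CommRing R] [IsDomain R] [AddCommGroup V] [Module R V]
    {N M : Submodule R V} (hNM : N ≤ M)
    (hprim : ∀ m ∈ M, ∀ k : R, k ≠ 0 → k • m ∈ N → m ∈ N) :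
    Module.IsTorsionFree R (M ⧸ range (inclusion hNM)) := by
  refine .of_smul_eq_zero fun k q hkq => or_iff_not_imp_left.mpr fun hk => ?_
  induction q using Submodule.Quotient.induction_on with | _ m
  rw [← Quotient.mk_smul] at hkq
  rw [Quotient.mk_eq_zero, range_inclusion, mem_comap] at hkq ⊢
  exact hprim m m.2 k hk hkq

theorem Submodule.exists_extend_of_primitive
    {R V P : Type*} [CommRing R] [IsDomain R] [IsPrincipalIdealRing R]
    [AddCommGroup V] [Module R V] [AddCommGroup P] [Module R P]
    {N M : Submodule R V} (hMfg : M.FG) (hNM : N ≤ M)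
    (hprim : ∀ m ∈ M, ∀ k : R, k ≠ 0 → k • m ∈ N → m ∈ N) (f : N →ₗ[R] P) :
    ∃ g : M →ₗ[R] P, g ∘ₗ inclusion hNM = f := by
  have : Module.Finite R M := Module.Finite.iff_fg.mpr hMfg
  have := isTorsionFree_quotient_range_inclusion hNM hprim
  exact exists_extend_of_projective_quotient_range (inclusion_injective hNM) f

theorem Submodule.exists_ratLinearMap_extend {V : Type*} [AddCommGroup V] [Module ℚ V]
    (M : Submodule ℤ V) (g : M →ₗ[ℤ] ℚ) : ∃ h : V →ₗ[ℚ] ℚ, ∀ m : M, h m = g m := by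
  obtain ⟨h, hh⟩ := (Module.Baer.of_divisible ℚ).extension_property M.subtype
    M.injective_subtype g
  exact ⟨h.toAddMonoidHom.toRatLinearMap, LinearMap.congr_fun hh⟩

theorem LinearMap.BilinForm.surjective_of_separatingLeft
    {K V : Type*} [Field K] [AddCommGroup V] [Module K V] [FiniteDimensional K V]
    {B : LinearMap.BilinForm K V} (hB : B.SeparatingLeft) : Function.Surjective B :=
  (B.linearEquivOfInjective (ker_eq_bot.mp (separatingLeft_iff_ker_eq_bot.mp hB))
    Subspace.dual_finrank_eq.symm).surjective

theorem LinearMap.BilinForm.exists_integral_on_lattice_and_eq_on_primitive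
    {V : Type*} [AddCommGroup V] [Module ℚ V] [FiniteDimensional ℚ V]
    {b : LinearMap.BilinForm ℚ V} (hb : b.SeparatingLeft)
    {N M : Submodule ℤ V} (hMfg : M.FG) (hNM : N ≤ M)
    (hprim : ∀ m ∈ M, ∀ k : ℤ, k ≠ 0 → k • m ∈ N → m ∈ N) (f : N →ₗ[ℤ] ℤ) :
    ∃ x : V, (∀ m ∈ M, ∃ k : ℤ, b x m = k) ∧ ∀ n : N, b x n = f n := by
  obtain ⟨F, rfl⟩ := exists_extend_of_primitive hMfg hNM hprim f
  obtain ⟨g, hg⟩ := M.exists_ratLinearMap_extend ((Int.castAddHom ℚ).toIntLinearMap ∘ₗ F)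
  obtain ⟨x, rfl⟩ := b.surjective_of_separatingLeft hb g
  exact ⟨x, fun m hm => ⟨F ⟨m, hm⟩, hg ⟨m, hm⟩⟩, fun n => hg (inclusion hNM n)⟩

theorem restrict_mem_range_iff_mem_sup_orthogonal
    {V : Type*} [AddCommGroup V] [Module ℚ V]
    {b : LinearMap.BilinForm ℚ V} (hsymm : ∀ x y : V, b x y = b y x)
    {M Mdual N NperpMdual : Submodule ℤ V} (hMMdual : M ≤ Mdual) (hNM : N ≤ M)
    (hNperpMdual : ∀ x : V, x ∈ NperpMdual ↔ x ∈ Mdual ∧ ∀ n ∈ N, b x n = 0)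
    {φ : N →ₗ[ℤ] (N →ₗ[ℤ] ℤ)} (hφ : ∀ n x : N, ((φ n x : ℤ) : ℚ) = b (x : V) (n : V))
    {ρ : Mdual →ₗ[ℤ] (N →ₗ[ℤ] ℤ)}
    (hρ : ∀ (x : Mdual) (n : N), ((ρ x n : ℤ) : ℚ) = b (x : V) (n : V))
    (x : Mdual) : ρ x ∈ range φ ↔ (x : V) ∈ N ⊔ NperpMdual := by
  have hρφ : ∀ n : N, φ n = ρ x ↔ ∀ n' ∈ N, b (x - n) n' = 0 := fun n => by
    rw [LinearMap.ext_iff, Subtype.forall]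
    refine forall₂_congr fun n' hn' => ?_
    rw [← Int.cast_inj (α := ℚ), hφ, hρ, map_sub, LinearMap.sub_apply, sub_eq_zero, eq_comm]
    exact Eq.congr_right (hsymm _ _)
  constructor
  · rintro ⟨n, hn⟩
    refine mem_sup.mpr ⟨n, n.2, x - n, ?_, add_sub_cancel _ _⟩
    exact (hNperpMdual _).mpr ⟨sub_mem x.2 (hMMdual (hNM n.2)), (hρφ n).mp hn⟩
  · intro hx
    obtain ⟨y, hy, z, hz, hyz⟩ := mem_sup.mp hx
    refine ⟨⟨y, hy⟩, (hρφ _).mpr ?_⟩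
    rw [← hyz, add_sub_cancel_left]
    exact ((hNperpMdual z).mp hz).2

theorem stmt1_general
    {V : Type*} [AddCommGroup V] [Module ℚ V] [FiniteDimensional ℚ V]
    (b : LinearMap.BilinForm ℚ V)
    (hsymm : ∀ x y : V, b x y = b y x)
    (hnd : ∀ v : V, (∀ w : V, b v w = 0) → v = 0)
    -- M is a ℤ-lattice in V
    (M : Submodule ℤ V) (hMfg : M.FG)
    -- the dual lattice M^∨
    (Mdual : Submodule ℤ V)
    (hMdual : ∀ x : V, x ∈ Mdual ↔ ∀ m ∈ M, ∃ k : ℤ, b x m = (k : ℚ))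
    (hMMdual : M ≤ Mdual)
    -- N ⊆ M primitive
    (N : Submodule ℤ V) (hNM : N ≤ M)
    (hprim : ∀ m ∈ M, ∀ k : ℤ, k ≠ 0 → k • m ∈ N → m ∈ N)
    -- N^⊥_{M^∨}, the orthogonal complement of N inside M^∨
    (NperpMdual : Submodule ℤ V)
    (hNperpMdual : ∀ x : V, x ∈ NperpMdual ↔ x ∈ Mdual ∧ ∀ n ∈ N, b x n = 0)
    -- the natural map N → N^∨ = Hom_ℤ(N, ℤ), n ↦ (x ↦ b(x,n))
    (φ : N →ₗ[ℤ] (N →ₗ[ℤ] ℤ))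
    (hφ : ∀ n x : N, ((φ n x : ℤ) : ℚ) = b (x : V) (n : V))
    -- the restriction map M^∨ → N^∨ = Hom_ℤ(N, ℤ), x ↦ (n ↦ b(x,n))
    (ρ : Mdual →ₗ[ℤ] (N →ₗ[ℤ] ℤ))
    (hρ : ∀ (x : Mdual) (n : N), ((ρ x n : ℤ) : ℚ) = b (x : V) (n : V)) :
    ∃ e : (Mdual ⧸ ((N ⊔ NperpMdual).comap Mdual.subtype)) ≃ₗ[ℤ]
        ((N →ₗ[ℤ] ℤ) ⧸ LinearMap.range φ),
      ∀ x : Mdual, e (Submodule.Quotient.mk x) = Submodule.Quotient.mk (ρ x) := by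
  have hρ_surj : Function.Surjective ρ := fun f => by
    obtain ⟨x, hxM, hxN⟩ := b.exists_integral_on_lattice_and_eq_on_primitive hnd hMfg hNM hprim f
    refine ⟨⟨x, (hMdual x).mpr hxM⟩, LinearMap.ext fun n => ?_⟩
    exact_mod_cast (hρ ⟨x, _⟩ n).trans (hxN n)
  let ψ := (range φ).mkQ ∘ₗ ρ
  have hker : (N ⊔ NperpMdual).comap Mdual.subtype = ker ψ := by
    ext x
    rw [mem_comap, mem_ker, comp_apply, mkQ_apply, Quotient.mk_eq_zero, subtype_apply,
      restrict_mem_range_iff_mem_sup_orthogonal hsymm hMMdual hNM hNperpMdual hφ hρ]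
  exact ⟨(quotEquivOfEq _ _ hker).trans
    (ψ.quotKerEquivOfSurjective ((range φ).mkQ_surjective.comp hρ_surj)), fun x => rfl⟩

/-- Let `M` be a `ℤ`-lattice in `V` with dual lattice `M^∨`, and
`N ⊆ M` a primitive `ℤ`-submodule.  The restriction map `M^∨ → N^∨ = Hom_ℤ(N, ℤ)`,
`x ↦ (n ↦ b(x,n))`, induces an isomorphism of abelian groups
`M^∨/(N + N^⊥_{M^∨}) ≅ N^∨/N`. -/
theorem stmt1
    {V : Type*} [AddCommGroup V] [Module ℚ V] [FiniteDimensional ℚ V]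
    (b : LinearMap.BilinForm ℚ V)
    (hsymm : ∀ x y : V, b x y = b y x)
    (hnd : ∀ v : V, (∀ w : V, b v w = 0) → v = 0)
    -- M is a ℤ-lattice in V
    (M : Submodule ℤ V) (hMfg : M.FG)
    (hMspan : Submodule.span ℚ (M : Set V) = ⊤)
    (hMint : ∀ x ∈ M, ∀ y ∈ M, ∃ k : ℤ, b x y = (k : ℚ))
    -- the dual lattice M^∨
    (Mdual : Submodule ℤ V)
    (hMdual : ∀ x : V, x ∈ Mdual ↔ ∀ m ∈ M, ∃ k : ℤ, b x m = (k : ℚ))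
    (hMMdual : M ≤ Mdual)
    -- N ⊆ M primitive
    (N : Submodule ℤ V) (hNM : N ≤ M)
    (hprim : ∀ m ∈ M, ∀ k : ℤ, k ≠ 0 → k • m ∈ N → m ∈ N)
    -- N^⊥_{M^∨}, the orthogonal complement of N inside M^∨
    (NperpMdual : Submodule ℤ V)
    (hNperpMdual : ∀ x : V, x ∈ NperpMdual ↔ x ∈ Mdual ∧ ∀ n ∈ N, b x n = 0)
    -- the natural map N → N^∨ = Hom_ℤ(N, ℤ), n ↦ (x ↦ b(x,n))
    (φ : N →ₗ[ℤ] (N →ₗ[ℤ] ℤ))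
    (hφ : ∀ n x : N, ((φ n x : ℤ) : ℚ) = b (x : V) (n : V))
    -- the restriction map M^∨ → N^∨ = Hom_ℤ(N, ℤ), x ↦ (n ↦ b(x,n))
    (ρ : Mdual →ₗ[ℤ] (N →ₗ[ℤ] ℤ))
    (hρ : ∀ (x : Mdual) (n : N), ((ρ x n : ℤ) : ℚ) = b (x : V) (n : V)) :
    ∃ e : (Mdual ⧸ ((N ⊔ NperpMdual).comap Mdual.subtype)) ≃ₗ[ℤ]
        ((N →ₗ[ℤ] ℤ) ⧸ LinearMap.range φ),
      ∀ x : Mdual, e (Submodule.Quotient.mk x) = Submodule.Quotient.mk (ρ x) :=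
  stmt1_general b hsymm hnd M hMfg Mdual hMdual hMMdual N hNM hprim NperpMdual hNperpMdual φ hφ ρ hρ
end

section
/- Let M be a ℤ-lattice in V with dual lattice M^∨ and discriminant d = [M^∨ : M], and let N ⊆ M be a primitive ℤ-submodule such that the restriction of b to the ℚ-span of N is nondegenerate. Then (N + N^⊥_{M^∨}) ∩ M = N + N^⊥, and [N^∨ : N] ≤ d · [M : N + N^⊥], where all the indices involved are finite. -/
/-!
Restricting the pairing to `N` gives a map `M^∨ → N^∨`. It is surjective: since `N` is
primitive, `M/N` is free, so every functional on `N` extends to `M`; and every functional on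
`M` extends `ℚ`-linearly to `V`, hence is `b(x, ·)` for some `x`, which then lies in `M^∨`.
The map sends `N + N^⊥` into the image of `N → N^∨`, so
`[N^∨ : N] ≤ [M^∨ : N + N^⊥] = d · [M : N + N^⊥]`. All indices are finite because
`V = ℚN ⊕ (ℚN)^⊥` puts a nonzero multiple of every element of `M^∨` into `N + N^⊥`.
The identity of lattices is the modular law, as `N^⊥ = N^⊥_{M^∨} ∩ M`.
-/

open LinearMap (BilinForm)
open Module Submodule

namespace Submodule

variable {R G : Type*} [CommRing R] [AddCommGroup G] [Module R G]

lemma isTorsionFree_quotient [Nontrivial R] {M : Type*} [AddCommGroup M] [Module R M]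
    (P : Submodule R M) (hP : ∀ (r : R) (m : M), r ≠ 0 → r • m ∈ P → m ∈ P) :
    IsTorsionFree R (M ⧸ P) := by
  refine .of_smul_eq_zero fun r x hx => or_iff_not_imp_left.mpr fun hr => ?_
  obtain ⟨m, rfl⟩ := Submodule.Quotient.mk_surjective P x
  rw [← Quotient.mk_smul, Quotient.mk_eq_zero] at hx
  exact (Quotient.mk_eq_zero P).mpr (hP r m hr hx)

lemma exists_extend_of_projective_quotient {N M : Submodule R G} (hNM : N ≤ M)
    [Projective R (M ⧸ N.comap M.subtype)] (f : Dual R N) :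
    ∃ g : Dual R M, ∀ n : N, g (inclusion hNM n) = f n := by
  set P := N.comap M.subtype
  obtain ⟨s, hs⟩ := P.mkQ.exists_rightInverse_of_surjective P.range_mkQ
  have hmem : ∀ m, (LinearMap.id - s ∘ₗ P.mkQ : M →ₗ[R] M) m ∈ P := fun m => by
    have h := LinearMap.congr_fun hs (P.mkQ m)
    rw [LinearMap.comp_apply, LinearMap.id_apply] at h
    rw [← Quotient.mk_eq_zero, ← mkQ_apply, LinearMap.sub_apply, map_sub, LinearMap.comp_apply,
      h, LinearMap.id_apply, sub_self]
  let π : M →ₗ[R] N := (comapSubtypeEquivOfLe hNM).toLinearMap ∘ₗ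
    (LinearMap.id - s ∘ₗ P.mkQ).codRestrict P hmem
  refine ⟨f ∘ₗ π, fun n => congr_arg f (Subtype.ext ?_)⟩
  have hn : P.mkQ (inclusion hNM n) = 0 := (Quotient.mk_eq_zero P).mpr n.2
  simp [π, hn]

lemma mapQ_surjective_of_surjective {M Q : Type*} [AddCommGroup M] [Module R M]
    [AddCommGroup Q] [Module R Q] {P : Submodule R M} {C : Submodule R Q} (f : M →ₗ[R] Q)
    (hf : Function.Surjective f) (h : P ≤ C.comap f) :
    Function.Surjective (P.mapQ C f h) := by
  intro y
  obtain ⟨z, rfl⟩ := Submodule.Quotient.mk_surjective C y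
  obtain ⟨x, rfl⟩ := hf z
  exact ⟨Quotient.mk x, rfl⟩

lemma card_quotient_comap_subtype_mul {A B C : Submodule R G} (hAB : A ≤ B) (hBC : B ≤ C) :
    Nat.card (C ⧸ B.comap C.subtype) * Nat.card (B ⧸ A.comap B.subtype) =
      Nat.card (C ⧸ A.comap C.subtype) :=
  (mul_comm _ _).trans <|
    AddSubgroup.relIndex_mul_relIndex A.toAddSubgroup B.toAddSubgroup C.toAddSubgroup hAB hBC

lemma finite_quotient_of_forall_exists_smul_mem {A B : Submodule ℤ G} (hA : A.FG)
    (h : ∀ x ∈ A, ∃ k : ℤ, k ≠ 0 ∧ k • x ∈ B) :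
    Finite (A ⧸ B.comap A.subtype) := by
  have : Module.Finite ℤ A := Module.Finite.iff_fg.mpr hA
  refine Module.finite_of_fg_torsion _ fun z => ?_
  obtain ⟨a, rfl⟩ := Submodule.Quotient.mk_surjective _ z
  obtain ⟨k, hk, hka⟩ := h a a.2
  exact ⟨⟨k, mem_nonZeroDivisors_of_ne_zero hk⟩, (Quotient.mk_eq_zero _).mpr hka⟩

end Submodule

section RationalLattice

variable {V : Type*} [AddCommGroup V] [Module ℚ V]

instance Module.isTorsionFree_int_of_rat : IsTorsionFree ℤ V := .trans ℚ

lemma Rat.den_smul_smul (q : ℚ) (v : V) : (q.den : ℤ) • q • v = q.num • v := by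
  rw [← Int.cast_smul_eq_zsmul ℚ, ← Int.cast_smul_eq_zsmul ℚ, smul_smul]
  exact_mod_cast congr_arg (· • v) (Rat.den_mul_eq_num q)

lemma Submodule.exists_int_smul_mem_of_mem_span_rat (S : Submodule ℤ V) {x : V}
    (hx : x ∈ span ℚ (S : Set V)) : ∃ k : ℤ, k ≠ 0 ∧ k • x ∈ S := by
  induction hx using Submodule.span_induction with
  | mem y hy => exact ⟨1, one_ne_zero, by simpa using hy⟩
  | zero => exact ⟨1, one_ne_zero, by simp⟩
  | add y z _ _ hy hz =>
    obtain ⟨k, hk, hky⟩ := hy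
    obtain ⟨l, hl, hlz⟩ := hz
    refine ⟨l * k, mul_ne_zero hl hk, ?_⟩
    rw [smul_add, mul_smul, mul_comm, mul_smul]
    exact S.add_mem (S.smul_mem l hky) (S.smul_mem k hlz)
  | smul q y _ hy =>
    obtain ⟨k, hk, hky⟩ := hy
    refine ⟨q.den * k, mul_ne_zero (by exact_mod_cast q.den_nz) hk, ?_⟩
    rw [mul_smul, smul_comm k, Rat.den_smul_smul]
    exact S.smul_mem _ hky

lemma Submodule.exists_basis_span_int_eq {M : Submodule ℤ V} (hMfg : M.FG)
    (hM : span ℚ (M : Set V) = ⊤) :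
    ∃ (n : ℕ) (B : Basis (Fin n) ℚ V), span ℤ (Set.range B) = M := by
  have : Module.Finite ℤ M := Module.Finite.iff_fg.mpr hMfg
  obtain ⟨n, e⟩ := Module.basisOfFiniteTypeTorsionFree' (R := ℤ) (M := M)
  have hspan : span ℤ (Set.range (M.subtype ∘ e)) = M := by
    rw [Set.range_comp, ← map_span, e.span_eq, map_top, range_subtype]
  have hli : LinearIndependent ℚ (M.subtype ∘ e) :=
    (LinearIndependent.iff_fractionRing ℤ ℚ).mp (e.linearIndependent.map' _ M.ker_subtype)
  refine ⟨n, Basis.mk hli ?_, by rwa [Basis.coe_mk]⟩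
  rw [← hM, span_le]
  exact fun x hx => span_le_restrictScalars ℤ ℚ _ (by rwa [hspan])

lemma Module.Basis.exists_extend_of_span_int {ι : Type*} (B : Basis ι ℚ V)
    (g : Dual ℤ (span ℤ (Set.range B))) :
    ∃ gQ : Dual ℚ V, ∀ m : span ℤ (Set.range B), gQ m = g m := by
  have hli : LinearIndependent ℤ B :=
    (LinearIndependent.iff_fractionRing ℤ ℚ).mpr B.linearIndependent
  let gQ : Dual ℚ V := B.constr ℚ fun i => (g (Basis.span hli i) : ℚ)
  have h : gQ.restrictScalars ℤ ∘ₗ (span ℤ (Set.range B)).subtype =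
      Algebra.linearMap ℤ ℚ ∘ₗ g :=
    (Basis.span hli).ext fun i => by simp [gQ, Basis.span_apply]
  exact ⟨gQ, LinearMap.congr_fun h⟩

end RationalLattice

namespace LinearMap.BilinForm

lemma dualSubmodule_anti {R S M : Type*} [CommRing R] [Field S] [AddCommGroup M] [Algebra R S]
    [Module R M] [Module S M] [IsScalarTower R S M] (B : BilinForm S M) {N₁ N₂ : Submodule R M}
    (h : N₁ ≤ N₂) : B.dualSubmodule N₂ ≤ B.dualSubmodule N₁ :=
  fun _ hx y hy => hx y (h hy)

variable {V : Type*} [AddCommGroup V] [Module ℚ V] (b : BilinForm ℚ V)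

lemma mem_dualSubmodule_iff_exists_intCast {M : Submodule ℤ V} {x : V} :
    x ∈ b.dualSubmodule M ↔ ∀ m ∈ M, ∃ k : ℤ, b x m = k := by
  simp only [mem_dualSubmodule, mem_one, algebraMap_int_eq, eq_intCast, eq_comm]

@[simp]
lemma intCast_dualSubmoduleToDual_apply (N : Submodule ℤ V) (x : b.dualSubmodule N) (y : N) :
    ((b.dualSubmoduleToDual N x y : ℤ) : ℚ) = b x y := by
  simpa using b.dualSubmoduleParing_spec x y

noncomputable def dualSubmoduleRestrict {M N : Submodule ℤ V} (hNM : N ≤ M) :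
    b.dualSubmodule M →ₗ[ℤ] Dual ℤ N :=
  b.dualSubmoduleToDual N ∘ₗ inclusion (b.dualSubmodule_anti hNM)

@[simp]
lemma intCast_dualSubmoduleRestrict_apply {M N : Submodule ℤ V} (hNM : N ≤ M)
    (x : b.dualSubmodule M) (n : N) : ((b.dualSubmoduleRestrict hNM x n : ℤ) : ℚ) = b x n :=
  b.intCast_dualSubmoduleToDual_apply N _ n

lemma dualSubmodule_fg (hb : b.Nondegenerate) {M : Submodule ℤ V} (hMfg : M.FG)
    (hM : span ℚ (M : Set V) = ⊤) : (b.dualSubmodule M).FG := by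
  classical
  obtain ⟨n, B, rfl⟩ := exists_basis_span_int_eq hMfg hM
  rw [dualSubmodule_span_of_basis b hb B]
  exact fg_span (Set.finite_range _)

lemma comap_sup_le_comap_range_dualSubmoduleRestrict (hsymm : ∀ x y : V, b x y = b y x)
    {M N P : Submodule ℤ V} (hNM : N ≤ M) (hP : ∀ p ∈ P, ∀ n ∈ N, b p n = 0)
    (φ : N →ₗ[ℤ] Dual ℤ N) (hφ : ∀ n x : N, ((φ n x : ℤ) : ℚ) = b x n) :
    (N ⊔ P).comap (b.dualSubmodule M).subtype ≤
      (LinearMap.range φ).comap (b.dualSubmoduleRestrict hNM) := by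
  intro x hx
  obtain ⟨n, hn, p, hp, hnp⟩ := mem_sup.mp hx
  have hx' : (x : V) = n + p := hnp.symm
  refine ⟨⟨n, hn⟩, LinearMap.ext fun n' => Int.cast_injective (α := ℚ) ?_⟩
  rw [hφ, intCast_dualSubmoduleRestrict_apply, hx', map_add, LinearMap.add_apply,
    hP p hp _ n'.2, add_zero]
  exact hsymm _ _

variable [FiniteDimensional ℚ V]

lemma dualSubmoduleToDual_surjective (hb : b.Nondegenerate) {M : Submodule ℤ V} (hMfg : M.FG)
    (hM : span ℚ (M : Set V) = ⊤) : Function.Surjective (b.dualSubmoduleToDual M) := by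
  obtain ⟨n, B, rfl⟩ := exists_basis_span_int_eq hMfg hM
  intro g
  obtain ⟨gQ, hgQ⟩ := B.exists_extend_of_span_int g
  have hx : ∀ v, b ((b.toDual hb).symm gQ) v = gQ v := fun v => by
    rw [← toDual_def hb, LinearEquiv.apply_symm_apply]
  have hmem : (b.toDual hb).symm gQ ∈ b.dualSubmodule (span ℤ (Set.range B)) :=
    b.mem_dualSubmodule_iff_exists_intCast.mpr fun m hm =>
      ⟨g ⟨m, hm⟩, by rw [hx, hgQ ⟨m, hm⟩]⟩
  refine ⟨⟨_, hmem⟩, LinearMap.ext fun m => Int.cast_injective (α := ℚ) ?_⟩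
  rw [intCast_dualSubmoduleToDual_apply, hx, hgQ]

lemma dualSubmoduleRestrict_surjective (hb : b.Nondegenerate) {M N : Submodule ℤ V}
    (hMfg : M.FG) (hM : span ℚ (M : Set V) = ⊤) (hNM : N ≤ M)
    (hN : ∀ m ∈ M, ∀ k : ℤ, k ≠ 0 → k • m ∈ N → m ∈ N) :
    Function.Surjective (b.dualSubmoduleRestrict hNM) := by
  have : Module.Finite ℤ M := Module.Finite.iff_fg.mpr hMfg
  have := (N.comap M.subtype).isTorsionFree_quotient fun k m hk hkm => hN m m.2 k hk hkm
  intro f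
  obtain ⟨g, hg⟩ := exists_extend_of_projective_quotient hNM f
  obtain ⟨x, rfl⟩ := b.dualSubmoduleToDual_surjective hb hMfg hM g
  refine ⟨x, LinearMap.ext fun n => Int.cast_injective (α := ℚ) ?_⟩
  rw [← hg n, intCast_dualSubmoduleRestrict_apply, intCast_dualSubmoduleToDual_apply]
  rfl

lemma exists_int_smul_mem_sup_of_orthogonal (hb : b.IsRefl) {M N P : Submodule ℤ V}
    (hN : ∀ v ∈ span ℚ (N : Set V), (∀ w ∈ span ℚ (N : Set V), b v w = 0) → v = 0)
    (hNM : N ≤ M) (hP : ∀ x ∈ M, (∀ n ∈ N, b x n = 0) → x ∈ P) {m : V}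
    (hm : m ∈ M) :
    ∃ k : ℤ, k ≠ 0 ∧ k • m ∈ N ⊔ P := by
  have hN' : (b.restrict (span ℚ (N : Set V))).Nondegenerate :=
    (hb.domRestrict _).nondegenerate_iff_separatingLeft.mpr fun x hx =>
      Subtype.ext (hN x x.2 fun w hw => hx ⟨w, hw⟩)
  have hm' : m ∈ span ℚ (N : Set V) ⊔ b.orthogonal (span ℚ (N : Set V)) := by
    rw [(isCompl_orthogonal_of_restrict_nondegenerate hb hN').sup_eq_top]
    exact mem_top
  obtain ⟨p, hp, q, hq, rfl⟩ := mem_sup.mp hm'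
  obtain ⟨k, hk, hkp⟩ := N.exists_int_smul_mem_of_mem_span_rat hp
  refine ⟨k, hk, mem_sup.mpr ⟨k • p, hkp, k • q, hP _ ?_ fun n hn => ?_, ?_⟩⟩
  · simpa using M.sub_mem (M.smul_mem k hm) (hNM hkp)
  · simp [hb _ _ (hq n (subset_span hn))]
  · rw [smul_add]

end LinearMap.BilinForm

/-- Let `M` be a `ℤ`-lattice in `V` with dual lattice `M^∨` and
discriminant `d = [M^∨ : M]`, and `N ⊆ M` a primitive `ℤ`-submodule such that the
restriction of `b` to the `ℚ`-span of `N` is nondegenerate.  Then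
`(N + N^⊥_{M^∨}) ∩ M = N + N^⊥` and `[N^∨ : N] ≤ d * [M : N + N^⊥]`, all the indices
involved being finite. -/
theorem stmt3
    {V : Type*} [AddCommGroup V] [Module ℚ V] [FiniteDimensional ℚ V]
    (b : LinearMap.BilinForm ℚ V)
    (hsymm : ∀ x y : V, b x y = b y x)
    (hnd : ∀ v : V, (∀ w : V, b v w = 0) → v = 0)
    -- M is a ℤ-lattice in V
    (M : Submodule ℤ V) (hMfg : M.FG)
    (hMspan : Submodule.span ℚ (M : Set V) = ⊤)
    (hMint : ∀ x ∈ M, ∀ y ∈ M, ∃ k : ℤ, b x y = (k : ℚ))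
    -- the dual lattice M^∨
    (Mdual : Submodule ℤ V)
    (hMdual : ∀ x : V, x ∈ Mdual ↔ ∀ m ∈ M, ∃ k : ℤ, b x m = (k : ℚ))
    -- N ⊆ M primitive, with nondegenerate restriction of b to its ℚ-span
    (N : Submodule ℤ V) (hNM : N ≤ M)
    (hprim : ∀ m ∈ M, ∀ k : ℤ, k ≠ 0 → k • m ∈ N → m ∈ N)
    (hNnd : ∀ v ∈ Submodule.span ℚ (N : Set V),
      (∀ w ∈ Submodule.span ℚ (N : Set V), b v w = 0) → v = 0)
    -- N^⊥, the orthogonal complement of N inside M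
    (Nperp : Submodule ℤ V)
    (hNperpdef : ∀ x : V, x ∈ Nperp ↔ x ∈ M ∧ ∀ n ∈ N, b x n = 0)
    -- N^⊥_{M^∨}, the orthogonal complement of N inside M^∨
    (NperpMdual : Submodule ℤ V)
    (hNperpMdual : ∀ x : V, x ∈ NperpMdual ↔ x ∈ Mdual ∧ ∀ n ∈ N, b x n = 0)
    -- the natural map N → N^∨ = Hom_ℤ(N, ℤ), n ↦ (x ↦ b(x,n))
    (φ : N →ₗ[ℤ] (N →ₗ[ℤ] ℤ))
    (hφ : ∀ n x : N, ((φ n x : ℤ) : ℚ) = b (x : V) (n : V)) :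
    (N ⊔ NperpMdual) ⊓ M = N ⊔ Nperp ∧
    Finite (Mdual ⧸ (M.comap Mdual.subtype)) ∧
    Finite ((N →ₗ[ℤ] ℤ) ⧸ LinearMap.range φ) ∧
    Finite (M ⧸ ((N ⊔ Nperp).comap M.subtype)) ∧
    Nat.card ((N →ₗ[ℤ] ℤ) ⧸ LinearMap.range φ) ≤
      Nat.card (Mdual ⧸ (M.comap Mdual.subtype)) *
        Nat.card (M ⧸ ((N ⊔ Nperp).comap M.subtype)) := by
  have hrefl : b.IsRefl := fun x y h => by rwa [hsymm]
  have hb : b.Nondegenerate := hrefl.nondegenerate_iff_separatingLeft.mpr hnd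
  obtain rfl : Mdual = b.dualSubmodule M :=
    ext fun x => (hMdual x).trans b.mem_dualSubmodule_iff_exists_intCast.symm
  have hMle : M ≤ b.dualSubmodule M := fun x hx => (hMdual x).mpr (hMint x hx)
  have hNperp_eq : Nperp = NperpMdual ⊓ M := by
    ext x
    simp only [hNperpdef, hNperpMdual, mem_inf]
    exact ⟨fun h => ⟨⟨hMle h.1, h.2⟩, h.1⟩, fun h => ⟨h.2, h.1.2⟩⟩
  have finDual : Finite (b.dualSubmodule M ⧸ M.comap (b.dualSubmodule M).subtype) :=
    finite_quotient_of_forall_exists_smul_mem (b.dualSubmodule_fg hb hMfg hMspan) fun x _ =>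
      M.exists_int_smul_mem_of_mem_span_rat (hMspan ▸ mem_top)
  have finM : Finite (M ⧸ (N ⊔ Nperp).comap M.subtype) :=
    finite_quotient_of_forall_exists_smul_mem hMfg fun m hm =>
      b.exists_int_smul_mem_sup_of_orthogonal hrefl hNnd hNM
        (fun x hx h => (hNperpdef x).2 ⟨hx, h⟩) hm
  have hcard := card_quotient_comap_subtype_mul (sup_le hNM (hNperp_eq ▸ inf_le_right)) hMle
  have : Finite (b.dualSubmodule M ⧸ (N ⊔ Nperp).comap (b.dualSubmodule M).subtype) :=
    Nat.finite_of_card_ne_zero (hcard ▸ mul_ne_zero Nat.card_pos.ne' Nat.card_pos.ne')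
  have hq := mapQ_surjective_of_surjective _
    (b.dualSubmoduleRestrict_surjective hb hMfg hMspan hNM hprim)
    (b.comap_sup_le_comap_range_dualSubmoduleRestrict hsymm hNM
      (fun p hp => ((hNperpdef p).1 hp).2) φ hφ)
  exact ⟨hNperp_eq ▸ sup_inf_assoc_of_le _ hNM, finDual, .of_surjective _ hq, finM,
    hcard ▸ Nat.card_le_card_of_surjective _ hq⟩
end
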